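/- (Phillips) For every effective transition system T there exists a boundedly branching computable transition system T′ (indeed one with branching degree bounded by 2) such that T and T′ are branching bisimilar. -/

import Mathlib

namespace RTMPaper

/-! ## Labelled transition systems

An `A`-labelled transition system; transition labels are drawn from `Option A`,
where `none` plays the role of the unobservable action τ. -/

structure LTS (A : Type) where
  State : Type
  tr : State → Option A → State → Prop
  init : State
  final : Set State

namespace LTS

variable {A : Type}

/-- A τ-step. -/
def tauStep (T : LTS A) (s t : T.State) : Prop := T.tr s none t

/-- `⇒` : the reflexive–transitive closure of τ-steps. -/
def tauReach (T : LTS A) : T.State → T.State → Prop :=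
  Relation.ReflTransGen T.tauStep

/-- `s —(a)→ t` : either `s —a→ t`, or `a = τ` and `s = t`. -/
def optStep (T : LTS A) (s : T.State) (a : Option A) (t : T.State) : Prop :=
  T.tr s a t ∨ (a = none ∧ s = t)

/-- The set of outgoing transitions of a state. -/
def out (T : LTS A) (s : T.State) : Set (Option A × T.State) :=
  {p | T.tr s p.1 p.2}

def FinitelyBranching (T : LTS A) : Prop := ∀ s, (T.out s).Finite

/-- The branching degree of `T` is bounded by `B`. -/
def BranchingDegreeBoundedBy (T : LTS A) (B : ℕ) : Prop :=
  ∀ s, (T.out s).Finite ∧ (T.out s).ncard ≤ B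

def BoundedlyBranching (T : LTS A) : Prop := ∃ B, T.BranchingDegreeBoundedBy B

/-- A deterministic transition system. -/
def Deterministic (T : LTS A) : Prop :=
  (∀ s a t₁ t₂, T.tr s a t₁ → T.tr s a t₂ → t₁ = t₂) ∧
  (∀ s t, T.tr s none t → ∀ a u, T.tr s a u → a = none)

/-- Relabelling of an LTS along a map of action alphabets (τ is mapped to τ). -/
def relabel {A' : Type} (f : A → A') (T : LTS A) : LTS A' where
  State := T.State
  tr s a t := ∃ a₀ : Option A, T.tr s a₀ t ∧ a = Option.map f a₀
  init := T.init
  final := T.final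

end LTS

/-! ## (Divergence-preserving) branching bisimilarity -/

structure IsBranchingBisimulation {A : Type} (T₁ T₂ : LTS A)
    (R : T₁.State → T₂.State → Prop) : Prop where
  fwd : ∀ s₁ s₂ a s₁', R s₁ s₂ → T₁.tr s₁ a s₁' →
    ∃ s₂'' s₂', T₂.tauReach s₂ s₂'' ∧ T₂.optStep s₂'' a s₂' ∧ R s₁ s₂'' ∧ R s₁' s₂'
  bwd : ∀ s₁ s₂ a s₂', R s₁ s₂ → T₂.tr s₂ a s₂' →
    ∃ s₁'' s₁', T₁.tauReach s₁ s₁'' ∧ T₁.optStep s₁'' a s₁' ∧ R s₁'' s₂ ∧ R s₁' s₂'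
  finFwd : ∀ s₁ s₂, R s₁ s₂ → s₁ ∈ T₁.final →
    ∃ s₂', T₂.tauReach s₂ s₂' ∧ R s₁ s₂' ∧ s₂' ∈ T₂.final
  finBwd : ∀ s₁ s₂, R s₁ s₂ → s₂ ∈ T₂.final →
    ∃ s₁', T₁.tauReach s₁ s₁' ∧ R s₁' s₂ ∧ s₁' ∈ T₁.final

/-- The divergence-preservation conditions on a branching bisimulation. -/
def DivergencePreserving {A : Type} (T₁ T₂ : LTS A)
    (R : T₁.State → T₂.State → Prop) : Prop :=
  (∀ (s₂ : T₂.State) (f : ℕ → T₁.State),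
      (∀ i, T₁.tauStep (f i) (f (i + 1))) → (∀ i, R (f i) s₂) →
      ∃ s₂', Relation.TransGen T₂.tauStep s₂ s₂' ∧ ∃ i, R (f i) s₂') ∧
  (∀ (s₁ : T₁.State) (f : ℕ → T₂.State),
      (∀ i, T₂.tauStep (f i) (f (i + 1))) → (∀ i, R s₁ (f i)) →
      ∃ s₁', Relation.TransGen T₁.tauStep s₁ s₁' ∧ ∃ i, R s₁' (f i))

/-- `T₁ ≈b T₂` : branching bisimilarity. -/
def BranchingBisimilar {A : Type} (T₁ T₂ : LTS A) : Prop :=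
  ∃ R, IsBranchingBisimulation T₁ T₂ R ∧ R T₁.init T₂.init

/-- `T₁ ≈Δb T₂` : divergence-preserving branching bisimilarity. -/
def DPBranchingBisimilar {A : Type} (T₁ T₂ : LTS A) : Prop :=
  ∃ R, IsBranchingBisimulation T₁ T₂ R ∧ DivergencePreserving T₁ T₂ R ∧
    R T₁.init T₂.init

/-! ## Effective and computable transition systems -/

/-- A set of natural numbers is recursively enumerable. -/
def REset (X : Set ℕ) : Prop :=
  ∃ f : ℕ →. Unit, Partrec f ∧ ∀ n, (f n).Dom ↔ n ∈ X

/-- A (finitely branching) LTS is computable if, with respect to some injective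
codings of its labels and states into ℕ, the functions `out` and `fin` are
recursive. -/
def LTS.IsComputable {A : Type} (T : LTS A) : Prop :=
  ∃ hfb : ∀ s, (T.out s).Finite,
    ∃ (cL : Option A → ℕ) (cS : T.State → ℕ),
      Function.Injective cL ∧ Function.Injective cS ∧
      (∃ fo : ℕ → ℕ, Computable fo ∧ ∀ s,
        fo (cS s) =
          Encodable.encode
            (((hfb s).toFinset).image fun p => Nat.pair (cL p.1) (cS p.2))) ∧
      (∃ ff : ℕ → ℕ, Computable ff ∧ ∀ s,
        (s ∈ T.final → ff (cS s) = 1) ∧ (s ∉ T.final → ff (cS s) = 0))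

/-- A (finitely branching) LTS is effective if, with respect to some injective
codings of its labels and states into ℕ, its transition relation and its set of
final states are recursively enumerable. -/
def LTS.IsEffective {A : Type} (T : LTS A) : Prop :=
  T.FinitelyBranching ∧
  ∃ (cL : Option A → ℕ) (cS : T.State → ℕ),
    Function.Injective cL ∧ Function.Injective cS ∧
    REset {n | ∃ s a t, T.tr s a t ∧ n = Nat.pair (cS s) (Nat.pair (cL a) (cS t))} ∧
    REset {n | ∃ s ∈ T.final, n = cS s}

/-! ## Reactive Turing machines -/

inductive Move : Type
  | L | R
deriving DecidableEq

instance instFintypeMove : Fintype Move :=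
  ⟨{Move.L, Move.R}, fun x => by cases x <;> simp⟩

/-- A tape instance: the content left of the head (nearest symbol first), the
symbol under the head, and the content right of the head (nearest symbol
first).  Tape symbols are `Option D`, with `none` the blank symbol □. -/
structure Tape (D : Type) where
  left : List (Option D)
  head : Option D
  right : List (Option D)

def Tape.empty (D : Type) : Tape D := ⟨[], none, []⟩

/-- Write `e` at the head position and move the head in direction `m`. -/
def Tape.writeMove {D : Type} (t : Tape D) (e : Option D) : Move → Tape D
  | .L =>
    match t.left with
    | [] => ⟨[], none, e :: t.right⟩
    | x :: l => ⟨l, x, e :: t.right⟩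
  | .R =>
    match t.right with
    | [] => ⟨e :: t.left, none, []⟩
    | x :: r => ⟨e :: t.left, x, r⟩

/-- A reactive Turing machine with action symbols `A` (labels `Option A`,
`none` being τ) and data symbols `D` (tape symbols `Option D`, `none` being
the blank symbol). -/
structure RTM (A D : Type) where
  Q : Type
  [instQ : Fintype Q]
  trans : Q → Option D → Option A → Option D → Move → Q → Prop
  init : Q
  final : Set Q

attribute [instance] RTM.instQ

/-- The transition system `T(M)` associated with an RTM `M`. -/
def RTM.lts {A D : Type} (M : RTM A D) : LTS A where
  State := M.Q × Tape D
  tr c a c' := ∃ e m, M.trans c.1 c.2.head a e m c'.1 ∧ c'.2 = c.2.writeMove e m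
  init := (M.init, Tape.empty D)
  final := {c | c.1 ∈ M.final}

def RTM.Deterministic {A D : Type} (M : RTM A D) : Prop :=
  (∀ s d a e₁ m₁ t₁ e₂ m₂ t₂, M.trans s d a e₁ m₁ t₁ → M.trans s d a e₂ m₂ t₂ →
      e₁ = e₂ ∧ m₁ = m₂ ∧ t₁ = t₂) ∧
  (∀ s d e₁ m₁ t₁, M.trans s d none e₁ m₁ t₁ →
      ∀ a e₂ m₂ t₂, M.trans s d a e₂ m₂ t₂ → a = none)

/-! ## Actions over channels, and parallel composition -/

/-- Actions over a set `C` of channels with communicated values in `V`,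
together with further (base) actions from `B`:  `recv c v` is `c?v`,
`send c v` is `c!v`. -/
inductive CAct (C V B : Type) : Type
  | recv : C → V → CAct C V B
  | send : C → V → CAct C V B
  | base : B → CAct C V B
deriving DecidableEq

/-- The (possibly silent) action `a` is a communication action on one of the
channels in `C'`. -/
def IsComm {C V B : Type} (C' : Set C) : Option (CAct C V B) → Prop
  | some (.recv c _) => c ∈ C'
  | some (.send c _) => c ∈ C'
  | _ => False

/-- Parallel composition `[T₁ ∥ T₂]_{C'}` of transition systems, enforcing
communication on the channels in `C'`. -/
def parLTS {C V B : Type} (C' : Set C) (T₁ T₂ : LTS (CAct C V B)) :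
    LTS (CAct C V B) where
  State := T₁.State × T₂.State
  init := (T₁.init, T₂.init)
  final := {p | p.1 ∈ T₁.final ∧ p.2 ∈ T₂.final}
  tr p a p' :=
    ¬ IsComm C' a ∧
    ((T₁.tr p.1 a p'.1 ∧ p.2 = p'.2) ∨
     (T₂.tr p.2 a p'.2 ∧ p.1 = p'.1) ∨
     (a = none ∧ ∃ c ∈ C', ∃ d : V,
        (T₁.tr p.1 (some (.send c d)) p'.1 ∧ T₂.tr p.2 (some (.recv c d)) p'.2) ∨
        (T₁.tr p.1 (some (.recv c d)) p'.1 ∧ T₂.tr p.2 (some (.send c d)) p'.2)))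

/-- The behaviour of `sender(M)`: output the symbols of `w` one by one along
channel `cu`, then halt in a final state. -/
def outputLTS {C V B : Type} (cu : C) (w : List V) : LTS (CAct C V B) where
  State := List V
  tr s a t := ∃ d, s = d :: t ∧ a = some (.send cu d)
  init := w
  final := {([] : List V)}

/-- A concrete (syntactic, Gödel-numberable) presentation of a reactive Turing
machine: states are `Fin (n+1)`, and the transition relation is a finite set of
tuples. -/
structure RTMc (A D : Type) where
  n : ℕ
  trans : Finset (Fin (n + 1) × Option D × Option A × Option D × Move × Fin (n + 1))
  init : Fin (n + 1)
  final : Finset (Fin (n + 1))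

def RTMc.toRTM {A D : Type} (M : RTMc A D) : RTM A D where
  Q := Fin (M.n + 1)
  trans s d a e m t := (s, d, a, e, m, t) ∈ M.trans
  init := M.init
  final := (↑M.final : Set (Fin (M.n + 1)))

end RTMPaper

/-!
Phillips' construction. Take injective codings of labels and states under which the transition
relation and the final states of `T` are recursively enumerable, and run both enumerations
against a clock. A state of the new system is a pair `(s, n)`; it can always tick to `(s, n + 1)`,
and in addition it takes the transition of `T` from `s` whose code `m` the enumeration accepts
within `k` steps, where `n = ⟨m, k⟩`; it is final when `s` is accepted as final within `n` steps.
So every state has at most two outgoing transitions, computable from `(s, n)`; and since the clock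
can be advanced until any given transition or the finality of `s` has been enumerated, relating
`s` to every `(s, n)` is a branching bisimulation.
-/

namespace RTMPaper

open Encodable Nat.Partrec.Code Function

theorem encode_finset_eq_of_sortedLT {F : Finset ℕ} {l : List ℕ} (hl : l.SortedLT)
    (hmem : ∀ x, x ∈ l ↔ x ∈ F) : encode F = encode l := by
  -- a finset is encoded as the list of its elements sorted by their codes
  change encode (F.sort (· ≤ ·)) = encode l
  rw [F.sortedLT_sort.eq_of_mem_iff hl fun x => by rw [Finset.mem_sort, hmem]]

def insertList (x : ℕ) (o : Option ℕ) : List ℕ :=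
  o.elim [x] fun y => if x < y then [x, y] else [y, x]

theorem encode_insert_toFinset {x : ℕ} {o : Option ℕ} (hx : x ∉ o) :
    encode (insert x o.toFinset) = encode (insertList x o) := by
  rcases o with _ | y
  · exact encode_finset_eq_of_sortedLT (List.sortedLT_iff_pairwise.2 (List.pairwise_singleton _ _))
      (by simp [insertList])
  · have hxy : x ≠ y := fun h => hx (h ▸ rfl)
    refine encode_finset_eq_of_sortedLT ?_ fun z => ?_ <;> rcases hxy.lt_or_gt with h | h <;>
      simp [insertList, h, h.not_gt, List.sortedLT_iff_pairwise, or_comm]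

theorem primrec₂_insertList : Primrec₂ insertList := by
  have pair : Primrec₂ fun a b : ℕ => [a, b] :=
    Primrec.list_cons.comp Primrec.fst (Primrec.list_cons.comp Primrec.snd (Primrec.const []))
  refine (Primrec.option_casesOn Primrec.snd
    (Primrec.list_cons.comp Primrec.fst (Primrec.const []))
    (Primrec.ite (Primrec.nat_lt.comp (Primrec.fst.comp Primrec.fst) Primrec.snd)
      (pair.comp (Primrec.fst.comp Primrec.fst) Primrec.snd)
      (pair.comp Primrec.snd (Primrec.fst.comp Primrec.fst))).to₂).of_eq fun ⟨x, o⟩ => ?_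
  cases o <;> rfl

theorem REset.exists_stages {X : Set ℕ} (hX : REset X) :
    ∃ P : ℕ → ℕ → Bool, Primrec₂ P ∧ Monotone P ∧ ∀ n, n ∈ X ↔ ∃ k, P k n := by
  obtain ⟨f, hf, hdom⟩ := hX
  obtain ⟨c, hc⟩ := exists_code.1 (Partrec.nat_iff.1 (hf.map (Computable.const 0).to₂))
  refine ⟨fun k n => (evaln k c n).isSome, ?_, ?_, fun n => ?_⟩
  · exact Primrec.option_isSome.comp
      (primrec_evaln.comp ((Primrec.fst.pair (Primrec.const c)).pair Primrec.snd))
  · intro k k' hk n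
    cases h : evaln k c n with
    | none => simp [h]
    | some x => simp [h, Option.isSome_iff_exists.2 ⟨x, evaln_mono hk h⟩]
  · have hdom' : (eval c n).Dom ↔ n ∈ X := by rw [hc]; exact hdom n
    rw [← hdom', Part.dom_iff_mem]
    simp only [evaln_complete, Option.isSome_iff_exists]
    exact exists_comm

namespace LTS

variable {A : Type}

structure Schedule (T : LTS A) where
  offer : T.State → ℕ → Option (Option A × T.State)
  accept : T.State → ℕ → Bool
  tr_of_offer {s n a t} : offer s n = some (a, t) → T.tr s a t
  exists_offer {s a t} : T.tr s a t → ∀ n, ∃ m ≥ n, offer s m = some (a, t)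
  mem_final_of_accept {s n} : accept s n → s ∈ T.final
  exists_accept {s} : s ∈ T.final → ∀ n, ∃ m ≥ n, accept s m

namespace Schedule

variable {T : LTS A} (σ : T.Schedule)

abbrev lts : LTS A where
  State := T.State × ℕ
  tr p a q := (a = none ∧ q = (p.1, p.2 + 1)) ∨ ∃ t, σ.offer p.1 p.2 = some (a, t) ∧ q = (t, 0)
  init := (T.init, 0)
  final := {p | σ.accept p.1 p.2}

theorem tauReach_lts_of_le (s : T.State) {n m : ℕ} (h : n ≤ m) :
    σ.lts.tauReach (s, n) (s, m) := by
  induction m, h using Nat.le_induction with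
  | base => exact .refl
  | succ m _ ih => exact ih.tail (Or.inl ⟨rfl, rfl⟩)

theorem branchingBisimilar_lts : BranchingBisimilar T σ.lts := by
  refine ⟨fun s p => p.1 = s, ⟨?_, ?_, ?_, ?_⟩, rfl⟩
  · rintro _ ⟨s, n⟩ a s' rfl hs
    obtain ⟨m, hnm, hm⟩ := σ.exists_offer hs n
    exact ⟨(s, m), (s', 0), σ.tauReach_lts_of_le s hnm, Or.inl (Or.inr ⟨s', hm, rfl⟩), rfl, rfl⟩
  · rintro _ ⟨s, n⟩ a q rfl (⟨rfl, rfl⟩ | ⟨t, ht, rfl⟩)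
    · exact ⟨s, s, .refl, Or.inr ⟨rfl, rfl⟩, rfl, rfl⟩
    · exact ⟨s, t, .refl, Or.inl (σ.tr_of_offer ht), rfl, rfl⟩
  · rintro _ ⟨s, n⟩ rfl hs
    obtain ⟨m, hnm, hm⟩ := σ.exists_accept hs n
    exact ⟨(s, m), σ.tauReach_lts_of_le s hnm, rfl, hm⟩
  · rintro _ ⟨s, n⟩ rfl hs
    exact ⟨s, .refl, rfl, σ.mem_final_of_accept hs⟩

theorem out_lts (s : T.State) (n : ℕ) :
    σ.lts.out (s, n) = insert (none, (s, n + 1))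
      {q : Option A × T.State × ℕ | ∃ t, σ.offer s n = some (q.1, t) ∧ q.2 = (t, 0)} := by
  ext q
  exact or_congr_left (Prod.ext_iff (x := q) (y := (none, (s, n + 1)))).symm

theorem branchingDegreeBoundedBy_two_lts : σ.lts.BranchingDegreeBoundedBy 2 := by
  rintro ⟨s, n⟩
  have hsub : Set.Subsingleton
      {q : Option A × T.State × ℕ | ∃ t, σ.offer s n = some (q.1, t) ∧ q.2 = (t, 0)} := by
    rintro ⟨a₁, _⟩ ⟨t₁, h₁, rfl⟩ ⟨a₂, _⟩ ⟨t₂, h₂, rfl⟩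
    cases h₁.symm.trans h₂
    rfl
  rw [out_lts]
  refine ⟨hsub.finite.insert _, (Set.ncard_insert_le _ _).trans ?_⟩
  exact Nat.succ_le_succ ((Set.ncard_le_one hsub.finite).2 fun _ ha _ hb => hsub ha hb)

structure IsPrimrec (cL : Option A → ℕ) (cS : T.State → ℕ) : Prop where
  offer : ∃ f : ℕ → ℕ → Option (ℕ × ℕ), Primrec₂ f ∧
    ∀ s n, f (cS s) n = (σ.offer s n).map (Prod.map cL cS)
  accept : ∃ f : ℕ → ℕ → Bool, Primrec₂ f ∧ ∀ s n, f (cS s) n = σ.accept s n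

theorem image_code_out_lts {cL : Option A → ℕ} {cS : T.State → ℕ} (s : T.State) (n : ℕ)
    (hfin : (σ.lts.out (s, n)).Finite) :
    hfin.toFinset.image (fun q => Nat.pair (cL q.1) (Nat.pair (cS q.2.1) q.2.2)) =
      insert (Nat.pair (cL none) (Nat.pair (cS s) (n + 1)))
        ((σ.offer s n).map fun p => Nat.pair (cL p.1) (Nat.pair (cS p.2) 0)).toFinset := by
  ext e
  rw [Finset.mem_image]
  simp only [Set.Finite.mem_toFinset]
  simp [out_lts]
  exact or_congr_left eq_comm

theorem isComputable_lts {cL : Option A → ℕ} {cS : T.State → ℕ} (hcL : Injective cL)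
    (hcS : Injective cS) (hσ : σ.IsPrimrec cL cS) : σ.lts.IsComputable := by
  obtain ⟨⟨f, hf, hf_eq⟩, ⟨g, hg, hg_eq⟩⟩ := hσ
  have hx : Primrec fun x : ℕ => x.unpair.1 := Primrec.fst.comp Primrec.unpair
  have hn : Primrec fun x : ℕ => x.unpair.2 := Primrec.snd.comp Primrec.unpair
  let tauCode : ℕ → ℕ := fun x => Nat.pair (cL none) (Nat.pair x.unpair.1 (x.unpair.2 + 1))
  let offerCode : ℕ → Option ℕ := fun x =>
    (f x.unpair.1 x.unpair.2).map fun p => Nat.pair p.1 (Nat.pair p.2 0)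
  have htau : Primrec tauCode := Primrec₂.natPair.comp (Primrec.const _)
    (Primrec₂.natPair.comp hx (Primrec.succ.comp hn))
  have hoffer : Primrec offerCode := Primrec.option_map (hf.comp hx hn)
    (Primrec₂.natPair.comp (Primrec.fst.comp Primrec.snd)
      (Primrec₂.natPair.comp (Primrec.snd.comp Primrec.snd) (Primrec.const 0))).to₂
  refine ⟨fun p => (σ.branchingDegreeBoundedBy_two_lts p).1, cL, fun p => Nat.pair (cS p.1) p.2,
    hcL, fun ⟨s₁, n₁⟩ ⟨s₂, n₂⟩ h => ?_,
    ⟨fun x => encode (insertList (tauCode x) (offerCode x)),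
      (Primrec.encode.comp (primrec₂_insertList.comp htau hoffer)).to_comp, fun ⟨s, n⟩ => ?_⟩,
    ⟨fun x => bif g x.unpair.1 x.unpair.2 then 1 else 0,
      (Primrec.cond (hg.comp hx hn) (Primrec.const 1) (Primrec.const 0)).to_comp,
      fun ⟨s, n⟩ => ?_⟩⟩
  · obtain ⟨h₁, h₂⟩ := Nat.pair_eq_pair.1 h
    exact Prod.ext (hcS h₁) h₂
  · rw [image_code_out_lts, encode_insert_toFinset] <;>
      simp [tauCode, offerCode, hf_eq, Option.map_map, Function.comp_def, Nat.pair_eq_pair]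
  · simp only [Nat.unpair_pair, hg_eq]
    show (σ.accept s n = true → _) ∧ (¬ σ.accept s n = true → _)
    cases σ.accept s n <;> simp

end Schedule

section Effective

variable {T : LTS A} {cL : Option A → ℕ} {cS : T.State → ℕ} {P : ℕ → ℕ → Bool}

open Classical in
noncomputable def stagedOffer (cL : Option A → ℕ) (cS : T.State → ℕ) (P : ℕ → ℕ → Bool)
    (s : T.State) (n : ℕ) : Option (Option A × T.State) :=
  if h : ∃ p : Option A × T.State, P n.unpair.2 n.unpair.1 ∧
      n.unpair.1 = Nat.pair (cS s) (Nat.pair (cL p.1) (cS p.2)) then some h.choose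
  else none

def stagedOfferCode (P : ℕ → ℕ → Bool) (x n : ℕ) : Option (ℕ × ℕ) :=
  if P n.unpair.2 n.unpair.1 ∧ n.unpair.1.unpair.1 = x then some n.unpair.1.unpair.2.unpair
  else none

theorem primrec₂_stagedOfferCode (hP : Primrec₂ P) : Primrec₂ (stagedOfferCode P) := by
  have hm : Primrec fun p : ℕ × ℕ => p.2.unpair.1 :=
    Primrec.fst.comp (Primrec.unpair.comp Primrec.snd)
  have hk : Primrec fun p : ℕ × ℕ => p.2.unpair.2 :=
    Primrec.snd.comp (Primrec.unpair.comp Primrec.snd)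
  exact Primrec.ite
    ((Primrec.eq.comp (hP.comp hk hm) (Primrec.const true)).and
      (Primrec.eq.comp (Primrec.fst.comp (Primrec.unpair.comp hm)) Primrec.fst))
    (Primrec.option_some.comp (Primrec.unpair.comp (Primrec.snd.comp (Primrec.unpair.comp hm))))
    (Primrec.const none)

theorem stagedOffer_eq_some_iff (hcL : Injective cL) (hcS : Injective cS) {s : T.State} {n : ℕ}
    {a : Option A} {t : T.State} :
    stagedOffer cL cS P s n = some (a, t) ↔
      P n.unpair.2 n.unpair.1 ∧ n.unpair.1 = Nat.pair (cS s) (Nat.pair (cL a) (cS t)) := by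
  unfold stagedOffer
  split_ifs with h
  · rw [Option.some_inj]
    refine ⟨fun heq => by simpa [heq] using h.choose_spec, fun hat => ?_⟩
    have := h.choose_spec.2.symm.trans hat.2
    simp only [Nat.pair_eq_pair, hcL.eq_iff, hcS.eq_iff, true_and] at this
    exact Prod.ext this.1 this.2
  · exact iff_of_false (by simp) fun hat => h ⟨(a, t), hat⟩

theorem tr_of_stagedOffer (hcL : Injective cL) (hcS : Injective cS)
    (hP : ∀ m, (∃ s a t, T.tr s a t ∧ m = Nat.pair (cS s) (Nat.pair (cL a) (cS t))) ↔ ∃ k, P k m)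
    {s : T.State} {n : ℕ} {a : Option A} {t : T.State}
    (h : stagedOffer cL cS P s n = some (a, t)) : T.tr s a t := by
  obtain ⟨hk, hm⟩ := (stagedOffer_eq_some_iff hcL hcS).1 h
  obtain ⟨s', a', t', htr, hm'⟩ := (hP _).2 ⟨_, hk⟩
  simp only [hm, Nat.pair_eq_pair, hcL.eq_iff, hcS.eq_iff] at hm'
  obtain ⟨rfl, rfl, rfl⟩ := hm'
  exact htr

theorem exists_stagedOffer (hcL : Injective cL) (hcS : Injective cS)
    (hP : ∀ m, (∃ s a t, T.tr s a t ∧ m = Nat.pair (cS s) (Nat.pair (cL a) (cS t))) ↔ ∃ k, P k m)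
    (hPmono : Monotone P) {s : T.State} {a : Option A} {t : T.State}
    (htr : T.tr s a t) (n : ℕ) : ∃ m ≥ n, stagedOffer cL cS P s m = some (a, t) := by
  obtain ⟨k, hk⟩ := (hP _).1 ⟨s, a, t, htr, rfl⟩
  refine ⟨Nat.pair (Nat.pair (cS s) (Nat.pair (cL a) (cS t))) (max k n),
    (le_max_right k n).trans (Nat.right_le_pair _ _), ?_⟩
  rw [stagedOffer_eq_some_iff hcL hcS, Nat.unpair_pair]
  exact ⟨Bool.le_iff_imp.1 (hPmono (le_max_left k n) _) hk, rfl⟩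

theorem stagedOfferCode_eq_map_stagedOffer (hcL : Injective cL) (hcS : Injective cS)
    (hP : ∀ m, (∃ s a t, T.tr s a t ∧ m = Nat.pair (cS s) (Nat.pair (cL a) (cS t))) ↔ ∃ k, P k m)
    (s : T.State) (n : ℕ) :
    stagedOfferCode P (cS s) n = (stagedOffer cL cS P s n).map (Prod.map cL cS) := by
  unfold stagedOfferCode
  rcases hoff : stagedOffer cL cS P s n with _ | ⟨a, t⟩
  · refine if_neg fun ⟨hk, hs⟩ => ?_
    obtain ⟨s', a, t, -, hm⟩ := (hP _).2 ⟨_, hk⟩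
    rw [hm, Nat.unpair_pair, hcS.eq_iff] at hs
    subst hs
    simpa [hoff] using (stagedOffer_eq_some_iff hcL hcS).2 ⟨hk, hm⟩
  · obtain ⟨hk, hm⟩ := (stagedOffer_eq_some_iff hcL hcS).1 hoff
    rw [if_pos ⟨hk, by rw [hm, Nat.unpair_pair]⟩, hm]
    simp

end Effective

theorem IsEffective.exists_primrec_schedule {T : LTS A} (hT : T.IsEffective) :
    ∃ (cL : Option A → ℕ) (cS : T.State → ℕ), Injective cL ∧ Injective cS ∧
      ∃ σ : T.Schedule, σ.IsPrimrec cL cS := by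
  obtain ⟨-, cL, cS, hcL, hcS, htr, hfinal⟩ := hT
  obtain ⟨P, hPrec, hPmono, hP⟩ := htr.exists_stages
  obtain ⟨Q, hQrec, hQmono, hQ⟩ := hfinal.exists_stages
  refine ⟨cL, cS, hcL, hcS,
    { offer := stagedOffer cL cS P
      accept := fun s n => Q n (cS s)
      tr_of_offer := tr_of_stagedOffer hcL hcS hP
      exists_offer := exists_stagedOffer hcL hcS hP hPmono
      mem_final_of_accept := fun {s n} hs => ?_
      exists_accept := fun {s} hs n => ?_ },
    ⟨⟨stagedOfferCode P, primrec₂_stagedOfferCode hPrec,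
        stagedOfferCode_eq_map_stagedOffer hcL hcS hP⟩,
      ⟨fun x n => Q n x, hQrec.comp Primrec.snd Primrec.fst, fun _ _ => rfl⟩⟩⟩
  · obtain ⟨s', hs', hss'⟩ := (hQ (cS s)).2 ⟨n, hs⟩
    rwa [hcS hss']
  · obtain ⟨k, hk⟩ := (hQ (cS s)).1 ⟨s, hs, rfl⟩
    exact ⟨max k n, le_max_right k n, Bool.le_iff_imp.1 (hQmono (le_max_left k n) _) hk⟩

end LTS

theorem effective_bbisim_computable_boundedly_branching_general
    {A : Type} (T : LTS A) (hT : T.IsEffective) :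
    ∃ T' : LTS A, T'.IsComputable ∧ T'.BranchingDegreeBoundedBy 2 ∧
      BranchingBisimilar T T' := by
  obtain ⟨cL, cS, hcL, hcS, σ, hσ⟩ := hT.exists_primrec_schedule
  exact ⟨σ.lts, σ.isComputable_lts hcL hcS hσ, σ.branchingDegreeBoundedBy_two_lts,
    σ.branchingBisimilar_lts⟩

/-- **Phillips.** Every effective transition system is branching
bisimilar to a computable transition system whose branching degree is bounded
by 2. -/
theorem effective_bbisim_computable_boundedly_branching
    {A : Type} [Fintype A] (T : LTS A) (hT : T.IsEffective) :
    ∃ T' : LTS A, T'.IsComputable ∧ T'.BranchingDegreeBoundedBy 2 ∧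
      BranchingBisimilar T T' :=
  effective_bbisim_computable_boundedly_branching_general T hT

end RTMPaper
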